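/- Let k and ν be real numbers with 0 < k < 1, ν > 0, and tanh ν < k; set k' = √(1 − k²) and φ = arcsin(tanh ν / k). Then ∫_0^{π/2} F(u, k') · sin u · cos u / ( (1 − k'² cosh²ν sin²u) · √(1 − k'² sin²u) ) du = (1/(k'² sinh ν cosh ν)) · [ K(k') · arctanh(tanh ν / k) − (π/2)·F(φ, k) ]. -/

import Mathlib

open Real intervalIntegral

/-- Incomplete elliptic integral of the first kind `F(φ, k)`. -/
noncomputable def ellipticF (φ k : ℝ) : ℝ :=
  ∫ θ in (0:ℝ)..φ, (1 - k ^ 2 * Real.sin θ ^ 2) ^ (-(1:ℝ)/2)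

/-- Incomplete elliptic integral of the second kind `E(φ, k)`. -/
noncomputable def ellipticE (φ k : ℝ) : ℝ :=
  ∫ θ in (0:ℝ)..φ, (1 - k ^ 2 * Real.sin θ ^ 2) ^ ((1:ℝ)/2)

/-- Complete elliptic integral of the first kind `K(k)`. -/
noncomputable def completeK (k : ℝ) : ℝ := ellipticF (Real.pi / 2) k

/-- Complete elliptic integral of the second kind `E(k)`. -/
noncomputable def completeE (k : ℝ) : ℝ := ellipticE (Real.pi / 2) k

/-- Inverse hyperbolic tangent. -/
noncomputable def arctanh (x : ℝ) : ℝ := Real.log ((1 + x) / (1 - x)) / 2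

section Aux

lemma std_integral {A B : ℝ} (hB : 0 < B) (hBA : B < A) :
    ∫ u in (0:ℝ)..(Real.pi/2), (A - B * Real.sin u ^ 2)⁻¹
      = Real.pi / (2 * Real.sqrt (A * (A - B))) := by
  have hA : 0 < A := hB.trans hBA
  set r := Real.sqrt ((A - B) / A) with hrdef
  have hAB : 0 < A - B := by linarith
  have hr0 : 0 < r := Real.sqrt_pos.2 (by positivity)
  have hr2 : A * r ^ 2 = A - B := by
    rw [hrdef, Real.sq_sqrt (by positivity)]; field_simp
  have hr1 : r < 1 := by
    by_contra h
    push_neg at h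
    nlinarith [mul_le_mul_of_nonneg_left (by nlinarith : (1:ℝ) ≤ r ^ 2) hA.le]
  have key : ∀ u : ℝ, HasDerivAt
      (fun x => (x - Real.arctan ((1 - r) * (Real.sin x * Real.cos x) /
        (1 - (1 - r) * Real.sin x ^ 2))) / (A * r)) ((A - B * Real.sin u ^ 2)⁻¹) u := by
    intro u
    have hs1 : Real.sin u ^ 2 ≤ 1 := Real.sin_sq_le_one u
    have hc2 : Real.cos u ^ 2 = 1 - Real.sin u ^ 2 := Real.cos_sq' u
    have hD0 : (0:ℝ) < 1 - (1 - r) * Real.sin u ^ 2 := by nlinarith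
    have hABs : (0:ℝ) < A - B * Real.sin u ^ 2 := by nlinarith
    have hN : HasDerivAt (fun x => (1 - r) * (Real.sin x * Real.cos x))
        ((1 - r) * (Real.cos u * Real.cos u + Real.sin u * -Real.sin u)) u :=
      ((Real.hasDerivAt_sin u).mul (Real.hasDerivAt_cos u)).const_mul _
    have hDd : HasDerivAt (fun x => 1 - (1 - r) * Real.sin x ^ 2)
        (-((1 - r) * (2 * Real.sin u ^ 1 * Real.cos u))) u := by
      simpa using (((Real.hasDerivAt_sin u).pow 2).const_mul (1 - r)).const_sub 1
    have hq := hN.div hDd hD0.ne'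
    have harct := (Real.hasDerivAt_arctan _).comp u hq
    have hH := ((hasDerivAt_id u).sub harct).div_const (A * r)
    refine hH.congr_deriv (Eq.symm ?_)
    rw [eq_div_iff (by positivity : A * r ≠ 0)]
    simp only [Pi.div_apply]
    have hE : (1:ℝ) + ((1 - r) * (Real.sin u * Real.cos u) / (1 - (1 - r) * Real.sin u ^ 2)) ^ 2 ≠ 0 := by positivity
    have hDne : (1:ℝ) - Real.sin u ^ 2 * (1 - r) ≠ 0 := by nlinarith
    field_simp
    rw [hc2, show B = A - A * r ^ 2 by linarith]
    ring
  rw [integral_eq_sub_of_hasDerivAt (fun u _ => key u)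
    ((Continuous.intervalIntegrable (Continuous.inv₀ (by fun_prop)
      (fun x => ne_of_gt (by nlinarith [Real.sin_sq_le_one x]))) _ _))]
  have hAr : Real.sqrt (A * (A - B)) = A * r := by
    have h1 : A * (A - B) = A ^ 2 * ((A - B) / A) := by field_simp
    rw [h1, Real.sqrt_mul (by positivity), Real.sqrt_sq hA.le, hrdef]
  rw [hAr]
  simp [Real.sin_pi_div_two, Real.cos_pi_div_two]
  rw [div_div]

lemma rpow_neg_half_eq (x : ℝ) (hx : 0 ≤ x) : x ^ (-(1:ℝ)/2) = (Real.sqrt x)⁻¹ := by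
  rw [Real.sqrt_eq_rpow, ← Real.rpow_neg hx]
  norm_num

lemma ellipticF_cont (κ : ℝ) (hκ : κ ^ 2 < 1) :
    Continuous fun θ : ℝ => (1 - κ ^ 2 * Real.sin θ ^ 2) ^ (-(1:ℝ)/2) := by
  apply Continuous.rpow_const (by fun_prop)
  intro x
  left
  exact ne_of_gt (by nlinarith [Real.sin_sq_le_one x])

lemma ellipticF_hasDerivAt {κ : ℝ} (hκ : κ ^ 2 < 1) (u : ℝ) :
    HasDerivAt (fun x => ellipticF x κ) ((1 - κ ^ 2 * Real.sin u ^ 2) ^ (-(1:ℝ)/2)) u := by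
  have hcont := ellipticF_cont κ hκ
  exact intervalIntegral.integral_hasDerivAt_right (hcont.intervalIntegrable _ _)
    (hcont.stronglyMeasurableAtFilter _ _) hcont.continuousAt

lemma arctanh_hasDerivAt {x : ℝ} (h1 : -1 < x) (h2 : x < 1) :
    HasDerivAt (fun y => Real.log ((1 + y) / (1 - y)) / 2) ((1 - x ^ 2)⁻¹) x := by
  have hev : (fun y => Real.log ((1 + y) / (1 - y)) / 2)
      =ᶠ[nhds x] fun y => (Real.log (1 + y) - Real.log (1 - y)) / 2 := by
    filter_upwards [Ioo_mem_nhds h1 h2] with y hy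
    rw [Real.log_div (by linarith [hy.1] : (1:ℝ) + y ≠ 0) (by linarith [hy.2] : (1:ℝ) - y ≠ 0)]
  have hA : HasDerivAt (fun y : ℝ => Real.log (1 + y)) ((1 + x)⁻¹) x := by
    exact ((Real.hasDerivAt_log (by linarith : (1:ℝ) + x ≠ 0)).comp x
      ((hasDerivAt_id x).const_add 1)).congr_deriv (by simp)
  have hB : HasDerivAt (fun y : ℝ => Real.log (1 - y)) ((1 - x)⁻¹ * (-1)) x := by
    exact ((Real.hasDerivAt_log (by linarith : (1:ℝ) - x ≠ 0)).comp x
      ((hasDerivAt_id x).const_sub 1)).congr_deriv (by simp)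
  have hd := (hA.sub hB).div_const 2
  have : ((1 + x)⁻¹ - (1 - x)⁻¹ * (-1)) / 2 = (1 - x ^ 2)⁻¹ := by
    have h1' : (1:ℝ) + x ≠ 0 := by linarith
    have h2' : (1:ℝ) - x ≠ 0 := by linarith
    have h3 : (1:ℝ) - x ^ 2 ≠ 0 := by nlinarith
    field_simp
    ring
  rw [this] at hd
  exact hd.congr_of_eventuallyEq hev

lemma G_hasDerivAt {κ m : ℝ} (hκ0 : 0 < κ) (hκ1 : κ < 1) (hm0 : 0 ≤ m)
    (hm : m ^ 2 < 1 - κ ^ 2) (u : ℝ) :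
    HasDerivAt (fun x => Real.log ((1 + m / Real.sqrt (1 - κ ^ 2 * Real.sin x ^ 2)) /
        (1 - m / Real.sqrt (1 - κ ^ 2 * Real.sin x ^ 2))) / 2)
      (m * κ ^ 2 * Real.sin u * Real.cos u /
        ((1 - κ ^ 2 * Real.sin u ^ 2 - m ^ 2) * Real.sqrt (1 - κ ^ 2 * Real.sin u ^ 2))) u := by
  have hin : ∀ x : ℝ, (0:ℝ) < 1 - κ ^ 2 * Real.sin x ^ 2 := fun x => by
    nlinarith [Real.sin_sq_le_one x]
  have hW : (0:ℝ) < Real.sqrt (1 - κ ^ 2 * Real.sin u ^ 2) := Real.sqrt_pos.2 (hin u)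
  set W := Real.sqrt (1 - κ ^ 2 * Real.sin u ^ 2) with hWdef
  have hW2 : W ^ 2 = 1 - κ ^ 2 * Real.sin u ^ 2 := Real.sq_sqrt (hin u).le
  have hmW : m < W := by nlinarith [Real.sin_sq_le_one u]
  have hinner : HasDerivAt (fun x => 1 - κ ^ 2 * Real.sin x ^ 2)
      (-(κ ^ 2 * (2 * Real.sin u ^ 1 * Real.cos u))) u := by
    simpa using (((Real.hasDerivAt_sin u).pow 2).const_mul (κ ^ 2)).const_sub 1
  have hw : HasDerivAt (fun x => Real.sqrt (1 - κ ^ 2 * Real.sin x ^ 2))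
      (-(κ ^ 2 * (2 * Real.sin u ^ 1 * Real.cos u)) / (2 * W)) u :=
    hinner.sqrt (hin u).ne'
  have hq : HasDerivAt (fun x => m / Real.sqrt (1 - κ ^ 2 * Real.sin x ^ 2))
      (m * -(-(κ ^ 2 * (2 * Real.sin u ^ 1 * Real.cos u)) / (2 * W) / W ^ 2)) u := by
    simpa [div_eq_mul_inv] using (hw.inv hW.ne').const_mul m
  have hm1 : (-1:ℝ) < m / W := by nlinarith [div_nonneg hm0 hW.le]
  have hm2 : m / W < 1 := by rw [div_lt_one hW]; exact hmW
  have harc := (arctanh_hasDerivAt hm1 hm2).comp u hq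
  refine harc.congr_deriv (Eq.symm ?_)
  have hne : W ^ 2 - m ^ 2 ≠ 0 := by nlinarith
  rw [show (1:ℝ) - κ ^ 2 * Real.sin u ^ 2 = W ^ 2 from hW2.symm]
  field_simp

lemma arctanh_integral_rep {w m : ℝ} (hw : 0 < w) (hm0 : 0 ≤ m) (hmw : m < w) :
    Real.log ((1 + m / w) / (1 - m / w)) / 2 / w = ∫ t in (0:ℝ)..m, (w ^ 2 - t ^ 2)⁻¹ := by
  have key : ∀ t ∈ Set.uIcc (0:ℝ) m, HasDerivAt
      (fun s => Real.log ((1 + s / w) / (1 - s / w)) / 2 / w) ((w ^ 2 - t ^ 2)⁻¹) t := by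
    intro t ht
    rw [Set.uIcc_of_le hm0] at ht
    have h1 : -1 < t / w := by
      have : (0:ℝ) ≤ t / w := div_nonneg ht.1 hw.le
      linarith
    have h2 : t / w < 1 := by rw [div_lt_one hw]; linarith [ht.2]
    have hq : HasDerivAt (fun s : ℝ => s / w) w⁻¹ t := by
      simpa using (hasDerivAt_id t).div_const w
    have := ((arctanh_hasDerivAt h1 h2).comp t hq).div_const w
    refine this.congr_deriv (Eq.symm ?_)
    have hwt : w ^ 2 - t ^ 2 ≠ 0 := by nlinarith [ht.1, ht.2, hmw]
    field_simp
  have hint : IntervalIntegrable (fun t => (w ^ 2 - t ^ 2)⁻¹) MeasureTheory.volume 0 m := by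
    apply ContinuousOn.intervalIntegrable
    apply ContinuousOn.inv₀ (by fun_prop)
    intro t ht
    rw [Set.uIcc_of_le hm0] at ht
    nlinarith [ht.1, ht.2]
  rw [intervalIntegral.integral_eq_sub_of_hasDerivAt key hint]
  simp

lemma fubini_swap {κ m : ℝ} (hm0 : 0 ≤ m) (hm : m ^ 2 < 1 - κ ^ 2) :
    (∫ u in (0:ℝ)..(Real.pi/2), ∫ t in (0:ℝ)..m, (1 - κ ^ 2 * Real.sin u ^ 2 - t ^ 2)⁻¹)
      = ∫ t in (0:ℝ)..m, ∫ u in (0:ℝ)..(Real.pi/2), (1 - κ ^ 2 * Real.sin u ^ 2 - t ^ 2)⁻¹ := by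
  have hpi : (0:ℝ) ≤ Real.pi / 2 := by positivity
  rw [intervalIntegral.integral_of_le hpi, intervalIntegral.integral_of_le hm0]
  simp_rw [intervalIntegral.integral_of_le hm0, intervalIntegral.integral_of_le hpi]
  apply MeasureTheory.integral_integral_swap
  rw [MeasureTheory.Measure.prod_restrict]
  have hcont : ContinuousOn (fun z : ℝ × ℝ => (1 - κ ^ 2 * Real.sin z.1 ^ 2 - z.2 ^ 2)⁻¹)
      (Set.Icc 0 (Real.pi/2) ×ˢ Set.Icc 0 m) := by
    apply ContinuousOn.inv₀ (by fun_prop)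
    rintro ⟨u, t⟩ ⟨_, ht⟩
    simp only [Set.mem_Icc] at ht
    have := Real.sin_sq_le_one u
    nlinarith [ht.1, ht.2]
  exact ((hcont.integrableOn_compact (isCompact_Icc.prod isCompact_Icc)).mono_set
    (Set.prod_mono Set.Ioc_subset_Icc_self Set.Ioc_subset_Icc_self))

lemma subst_final {k m : ℝ} (hk0 : 0 < k) (hk1 : k < 1) (hm0 : 0 ≤ m) (hmk : m < k) :
    ∫ t in (0:ℝ)..m, Real.pi / (2 * Real.sqrt ((1 - t ^ 2) * (k ^ 2 - t ^ 2)))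
      = Real.pi / 2 * ellipticF (Real.arcsin (m / k)) k := by
  have hf : ∀ t ∈ Set.uIcc (0:ℝ) m, HasDerivAt (fun s => Real.arcsin (s / k))
      ((Real.sqrt (k ^ 2 - t ^ 2))⁻¹) t := by
    intro t ht
    rw [Set.uIcc_of_le hm0] at ht
    have htk : t / k < 1 := by rw [div_lt_one hk0]; linarith [ht.2]
    have htk0 : 0 ≤ t / k := div_nonneg ht.1 hk0.le
    have hq : HasDerivAt (fun s : ℝ => s / k) k⁻¹ t := by
      simpa using (hasDerivAt_id t).div_const k
    have := (Real.hasDerivAt_arcsin (by linarith) (by linarith)).comp t hq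
    refine this.congr_deriv (Eq.symm ?_)
    rw [show (1:ℝ) - (t/k)^2 = (k^2 - t^2)/k^2 by field_simp]
    rw [Real.sqrt_div (by nlinarith [ht.1, ht.2] : (0:ℝ) ≤ k^2 - t^2), Real.sqrt_sq hk0.le]
    have hpos : 0 < Real.sqrt (k^2 - t^2) := Real.sqrt_pos.2 (by nlinarith [ht.1, ht.2])
    field_simp
  have hf' : ContinuousOn (fun t => (Real.sqrt (k ^ 2 - t ^ 2))⁻¹) (Set.uIcc 0 m) := by
    apply ContinuousOn.inv₀ (by fun_prop)
    intro t ht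
    rw [Set.uIcc_of_le hm0] at ht
    exact ne_of_gt (Real.sqrt_pos.2 (by nlinarith [ht.1, ht.2]))
  have hg := ellipticF_cont k (by nlinarith)
  have hsub := intervalIntegral.integral_comp_smul_deriv hf hf' hg
  simp only [Function.comp] at hsub
  have hL : ∫ t in (0:ℝ)..m, Real.pi / (2 * Real.sqrt ((1 - t ^ 2) * (k ^ 2 - t ^ 2)))
      = ∫ t in (0:ℝ)..m, Real.pi / 2 *
        ((Real.sqrt (k ^ 2 - t ^ 2))⁻¹ • (1 - k ^ 2 * Real.sin (Real.arcsin (t / k)) ^ 2) ^ (-(1:ℝ)/2)) := by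
    apply intervalIntegral.integral_congr
    intro t ht
    rw [Set.uIcc_of_le hm0] at ht
    have h1 : -1 ≤ t / k := by nlinarith [div_nonneg ht.1 hk0.le]
    have h2 : t / k ≤ 1 := by rw [div_le_one hk0]; linarith [ht.2]
    simp only []
    rw [Real.sin_arcsin h1 h2]
    rw [show (1:ℝ) - k ^ 2 * (t/k) ^ 2 = 1 - t^2 by field_simp]
    have ht2 : (0:ℝ) ≤ 1 - t^2 := by nlinarith [ht.1, ht.2]
    have hkt2 : (0:ℝ) < k^2 - t^2 := by nlinarith [ht.1, ht.2]
    rw [smul_eq_mul, rpow_neg_half_eq _ ht2, Real.sqrt_mul ht2]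
    have e1 : 0 < Real.sqrt (1 - t^2) := by
      rcases eq_or_lt_of_le ht2 with h | h
      · exfalso; nlinarith [ht.1, ht.2]
      · exact Real.sqrt_pos.2 h
    have e2 : 0 < Real.sqrt (k^2 - t^2) := Real.sqrt_pos.2 hkt2
    field_simp
  rw [hL, intervalIntegral.integral_const_mul, hsub]
  simp only [zero_div, Real.arcsin_zero]
  simp [ellipticF]

end Aux

set_option maxHeartbeats 2000000 in
theorem stmt_9 (k ν : ℝ) (hk0 : 0 < k) (hk1 : k < 1) (hν : 0 < ν)
    (hνk : Real.tanh ν < k)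
    (k' φ : ℝ) (hk' : k' = Real.sqrt (1 - k ^ 2))
    (hφ : φ = Real.arcsin (Real.tanh ν / k)) :
    (∫ u in (0:ℝ)..(Real.pi / 2),
        ellipticF u k' * Real.sin u * Real.cos u /
          ((1 - k' ^ 2 * Real.cosh ν ^ 2 * Real.sin u ^ 2)
            * Real.sqrt (1 - k' ^ 2 * Real.sin u ^ 2)))
      = 1 / (k' ^ 2 * Real.sinh ν * Real.cosh ν) *
          (completeK k' * arctanh (Real.tanh ν / k) - Real.pi / 2 * ellipticF φ k) := by
  have h1k2 : 0 < 1 - k ^ 2 := by nlinarith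
  have hk'2 : k' ^ 2 = 1 - k ^ 2 := by rw [hk']; exact Real.sq_sqrt h1k2.le
  have hk'0 : 0 < k' := by rw [hk']; exact Real.sqrt_pos.2 h1k2
  have hk'1 : k' < 1 := by nlinarith
  have hk'sq : k' ^ 2 < 1 := by nlinarith
  set m := Real.tanh ν with hmdef
  have hch : 0 < Real.cosh ν := Real.cosh_pos ν
  have hsh : 0 < Real.sinh ν := Real.sinh_pos_iff.2 hν
  have hmch : m * Real.cosh ν = Real.sinh ν := by
    rw [hmdef, Real.tanh_eq_sinh_div_cosh]; field_simp
  have hm0 : 0 < m := by nlinarith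
  have hmk : m < k := hνk
  have hmsq : m ^ 2 < 1 - k' ^ 2 := by rw [hk'2]; nlinarith
  have hch2 : Real.cosh ν ^ 2 - Real.sinh ν ^ 2 = 1 := Real.cosh_sq_sub_sinh_sq ν
  have hin : ∀ x : ℝ, (0:ℝ) < 1 - k' ^ 2 * Real.sin x ^ 2 := fun x => by
    nlinarith [Real.sin_sq_le_one x]
  have hDid : ∀ x : ℝ, 1 - k' ^ 2 * Real.cosh ν ^ 2 * Real.sin x ^ 2
      = Real.cosh ν ^ 2 * (1 - k' ^ 2 * Real.sin x ^ 2 - m ^ 2) := fun x => by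
    linear_combination (m * Real.cosh ν + Real.sinh ν) * hmch - hch2
  have hsub2 : ∀ x : ℝ, (0:ℝ) < 1 - k' ^ 2 * Real.sin x ^ 2 - m ^ 2 := fun x => by
    nlinarith [Real.sin_sq_le_one x]
  have hDpos : ∀ x : ℝ, (0:ℝ) < 1 - k' ^ 2 * Real.cosh ν ^ 2 * Real.sin x ^ 2 := fun x => by
    rw [hDid x]; exact mul_pos (by positivity) (hsub2 x)
  set c0 := (m * k' ^ 2 * Real.cosh ν ^ 2)⁻¹ with hc0
  have hGd : ∀ u : ℝ, HasDerivAt (fun x =>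
      Real.log ((1 + m / Real.sqrt (1 - k' ^ 2 * Real.sin x ^ 2)) /
        (1 - m / Real.sqrt (1 - k' ^ 2 * Real.sin x ^ 2))) / 2 * c0)
      (Real.sin u * Real.cos u / ((1 - k' ^ 2 * Real.cosh ν ^ 2 * Real.sin u ^ 2)
        * Real.sqrt (1 - k' ^ 2 * Real.sin u ^ 2))) u := by
    intro u
    have h := (G_hasDerivAt hk'0 hk'1 hm0.le hmsq u).mul_const c0
    refine h.congr_deriv (Eq.symm ?_)
    rw [hDid u, hc0]
    have hW : 0 < Real.sqrt (1 - k' ^ 2 * Real.sin u ^ 2) := Real.sqrt_pos.2 (hin u)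
    have h2 := hsub2 u
    field_simp
  have hu' : IntervalIntegrable (fun x => (1 - k' ^ 2 * Real.sin x ^ 2) ^ (-(1:ℝ)/2))
      MeasureTheory.volume 0 (Real.pi/2) := (ellipticF_cont k' hk'sq).intervalIntegrable _ _
  have hgcont : Continuous (fun u => Real.sin u * Real.cos u /
      ((1 - k' ^ 2 * Real.cosh ν ^ 2 * Real.sin u ^ 2)
        * Real.sqrt (1 - k' ^ 2 * Real.sin u ^ 2))) := by
    apply Continuous.div (by fun_prop)
    · exact Continuous.mul (by fun_prop) (Real.continuous_sqrt.comp (by fun_prop))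
    · intro x
      exact ne_of_gt (mul_pos (hDpos x) (Real.sqrt_pos.2 (hin x)))
  have hparts := intervalIntegral.integral_mul_deriv_eq_deriv_mul
      (u := fun x => ellipticF x k') (v := fun x =>
        Real.log ((1 + m / Real.sqrt (1 - k' ^ 2 * Real.sin x ^ 2)) /
          (1 - m / Real.sqrt (1 - k' ^ 2 * Real.sin x ^ 2))) / 2 * c0)
      (fun x _ => ellipticF_hasDerivAt hk'sq x) (fun x _ => hGd x) hu'
      (hgcont.intervalIntegrable _ _)
  have hLHS : (∫ u in (0:ℝ)..(Real.pi / 2),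
      ellipticF u k' * Real.sin u * Real.cos u /
        ((1 - k' ^ 2 * Real.cosh ν ^ 2 * Real.sin u ^ 2)
          * Real.sqrt (1 - k' ^ 2 * Real.sin u ^ 2)))
      = ∫ u in (0:ℝ)..(Real.pi / 2), ellipticF u k' * (Real.sin u * Real.cos u /
        ((1 - k' ^ 2 * Real.cosh ν ^ 2 * Real.sin u ^ 2)
          * Real.sqrt (1 - k' ^ 2 * Real.sin u ^ 2))) :=
    intervalIntegral.integral_congr fun x _ => by ring
  rw [hLHS, hparts]
  have hF0 : ellipticF 0 k' = 0 := by simp [ellipticF]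
  have hwpi : Real.sqrt (1 - k' ^ 2 * Real.sin (Real.pi/2) ^ 2) = k := by
    rw [Real.sin_pi_div_two, one_pow, mul_one,
      show (1:ℝ) - k' ^ 2 = k ^ 2 by linarith [hk'2], Real.sqrt_sq hk0.le]
  rw [hF0, hwpi]
  have hptw : ∀ x ∈ Set.uIcc (0:ℝ) (Real.pi/2),
      (1 - k' ^ 2 * Real.sin x ^ 2) ^ (-(1:ℝ)/2) *
        (Real.log ((1 + m / Real.sqrt (1 - k' ^ 2 * Real.sin x ^ 2)) /
          (1 - m / Real.sqrt (1 - k' ^ 2 * Real.sin x ^ 2))) / 2 * c0)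
      = c0 * ∫ t in (0:ℝ)..m, (1 - k' ^ 2 * Real.sin x ^ 2 - t ^ 2)⁻¹ := by
    intro x _
    have hwx : 0 < Real.sqrt (1 - k' ^ 2 * Real.sin x ^ 2) := Real.sqrt_pos.2 (hin x)
    have hw2 : Real.sqrt (1 - k' ^ 2 * Real.sin x ^ 2) ^ 2 = 1 - k' ^ 2 * Real.sin x ^ 2 :=
      Real.sq_sqrt (hin x).le
    have hmw : m < Real.sqrt (1 - k' ^ 2 * Real.sin x ^ 2) := by
      nlinarith [Real.sin_sq_le_one x]
    have hrep := arctanh_integral_rep hwx hm0.le hmw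
    rw [hw2] at hrep
    rw [rpow_neg_half_eq _ (hin x).le, ← hrep]
    ring
  have hJ : (∫ x in (0:ℝ)..(Real.pi/2),
      (1 - k' ^ 2 * Real.sin x ^ 2) ^ (-(1:ℝ)/2) *
        (Real.log ((1 + m / Real.sqrt (1 - k' ^ 2 * Real.sin x ^ 2)) /
          (1 - m / Real.sqrt (1 - k' ^ 2 * Real.sin x ^ 2))) / 2 * c0))
      = c0 * (Real.pi / 2 * ellipticF φ k) := by
    rw [intervalIntegral.integral_congr hptw, intervalIntegral.integral_const_mul,
      fubini_swap hm0.le hmsq]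
    congr 1
    have hint : ∀ t ∈ Set.uIcc (0:ℝ) m,
        (∫ u in (0:ℝ)..(Real.pi/2), (1 - k' ^ 2 * Real.sin u ^ 2 - t ^ 2)⁻¹)
          = Real.pi / (2 * Real.sqrt ((1 - t ^ 2) * (k ^ 2 - t ^ 2))) := by
      intro t ht
      rw [Set.uIcc_of_le hm0.le] at ht
      have h1 : k' ^ 2 < 1 - t ^ 2 := by nlinarith [ht.1, ht.2]
      have hstd := std_integral (A := 1 - t ^ 2) (B := k' ^ 2) (by positivity) h1
      have hcong : (∫ u in (0:ℝ)..(Real.pi/2), (1 - k' ^ 2 * Real.sin u ^ 2 - t ^ 2)⁻¹)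
          = ∫ u in (0:ℝ)..(Real.pi/2), (1 - t ^ 2 - k' ^ 2 * Real.sin u ^ 2)⁻¹ :=
        intervalIntegral.integral_congr fun u _ => by ring_nf
      rw [hcong, hstd, show (1:ℝ) - t ^ 2 - k' ^ 2 = k ^ 2 - t ^ 2 by linarith [hk'2]]
    rw [intervalIntegral.integral_congr hint, subst_final hk0 hk1 hm0.le hmk, hφ]
  rw [hJ]
  have hc0' : c0 = 1 / (k' ^ 2 * Real.sinh ν * Real.cosh ν) := by
    rw [hc0, one_div]
    congr 1
    linear_combination (k' ^ 2 * Real.cosh ν) * hmch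
  rw [hc0']
  simp only [completeK, arctanh, hF0, zero_mul, sub_zero]
  ring
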